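/- (Quadratic Hereditary.) Let ρ be a positive integer, let Q ∈ ℝ^{n×n} and G₀ ∈ ℝ^{n×n} be symmetric, and for k = 0,…,ρ let Wₖ ∈ ℝ^{n×n} be symmetric positive definite and Sₖ ∈ ℝ^{n×q_k} have linearly independent columns. Assume Sₖᵀ·Wₖ·Sᵢ = 0 whenever 0 ≤ i < k ≤ ρ. Define iteratively G_{k+1} := Q + (I − Wₖ·P(Sₖ,Wₖ))·(Gₖ − Q)·(I − P(Sₖ,Wₖ)·Wₖ), where P(Sₖ,Wₖ) := Sₖ(SₖᵀWₖSₖ)⁻¹Sₖᵀ. Then G_{k+1}·Sᵢ = Q·Sᵢ for all 0 ≤ i ≤ k ≤ ρ; moreover, if the total number of columns q₀ + ⋯ + q_ρ equals n, then G_{ρ+1} = Q. -/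

import Mathlib

open Matrix

/-!
Since `(G' - Q) T = (1 - W P) (G - Q) (T - P W T)` for the update `G'` of `G` and any `T`, the
update satisfies `G' T = Q T` as soon as `(G - Q) (T - P W T) = 0`. Now `P(S,W) W` fixes `S` and
kills every `T` with `Sᵀ W T = 0`; so `G_{k+1} S_k = Q S_k`, and an earlier relation
`G_k S_i = Q S_i` survives because `S_kᵀ W_k S_i = 0`. For the second claim, the same
conjugacy makes the column space of `S_k` meet that of `S_0, …, S_{k-1}` trivially (it lies in
the kernel of `S_kᵀ W_k`, on which `S_k` is injective), so the column spaces of all the `S_i`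
have dimension `q_0 + ⋯ + q_ρ = n` together, and `G_{ρ+1} - Q` vanishes on all of `ℝⁿ`.
-/

/-- The projection-type matrix `P(S,W) := S (Sᵀ W S)⁻¹ Sᵀ`. -/
noncomputable def projMat {n q : ℕ} (S : Matrix (Fin n) (Fin q) ℝ)
    (W : Matrix (Fin n) (Fin n) ℝ) : Matrix (Fin n) (Fin n) ℝ :=
  S * (Sᵀ * W * S)⁻¹ * Sᵀ

section LeastChangeUpdate

variable {n q p : ℕ} (Q G : Matrix (Fin n) (Fin n) ℝ) (S : Matrix (Fin n) (Fin q) ℝ)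
  (W : Matrix (Fin n) (Fin n) ℝ) (T : Matrix (Fin n) (Fin p) ℝ)

noncomputable def leastChangeUpdate : Matrix (Fin n) (Fin n) ℝ :=
  Q + (1 - W * projMat S W) * (G - Q) * (1 - projMat S W * W)

variable {S W T}

lemma projMat_mul_mul_self (hS : IsUnit (Sᵀ * W * S).det) : projMat S W * W * S = S := by
  rw [projMat, Matrix.mul_assoc _ Sᵀ W, Matrix.mul_assoc _ (Sᵀ * W) S, Matrix.mul_assoc S,
    nonsing_inv_mul _ hS, Matrix.mul_one]

lemma projMat_mul_mul_eq_zero (hST : Sᵀ * W * T = 0) : projMat S W * W * T = 0 := by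
  simp only [projMat, Matrix.mul_assoc] at hST ⊢
  rw [hST, Matrix.mul_zero, Matrix.mul_zero]

lemma leastChangeUpdate_mul_eq {Q G}
    (h : (G - Q) * (T - projMat S W * W * T) = 0) :
    leastChangeUpdate Q G S W * T = Q * T := by
  have : leastChangeUpdate Q G S W * T
      = Q * T + (1 - W * projMat S W) * ((G - Q) * (T - projMat S W * W * T)) := by
    simp only [leastChangeUpdate, Matrix.add_mul, Matrix.mul_assoc, Matrix.mul_sub,
      Matrix.sub_mul, Matrix.one_mul]
  rw [this, h, Matrix.mul_zero, add_zero]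

lemma leastChangeUpdate_mul_self (hS : IsUnit (Sᵀ * W * S).det) :
    leastChangeUpdate Q G S W * S = Q * S :=
  leastChangeUpdate_mul_eq (by rw [projMat_mul_mul_self hS, sub_self, Matrix.mul_zero])

lemma leastChangeUpdate_mul_of_mul_eq {Q G} (hST : Sᵀ * W * T = 0) (hGT : G * T = Q * T) :
    leastChangeUpdate Q G S W * T = Q * T :=
  leastChangeUpdate_mul_eq <| by
    rw [projMat_mul_mul_eq_zero hST, sub_zero, Matrix.sub_mul, hGT, sub_self]

end LeastChangeUpdate

lemma disjoint_ker_mulVecLin_range_of_injective_mul {m n p : ℕ} {B : Matrix (Fin m) (Fin n) ℝ}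
    {S : Matrix (Fin n) (Fin p) ℝ} (h : Function.Injective (B * S).mulVec) :
    Disjoint (LinearMap.ker B.mulVecLin) (LinearMap.range S.mulVecLin) := by
  rw [Submodule.disjoint_def]
  rintro _ hker ⟨y, rfl⟩
  rw [LinearMap.mem_ker, mulVecLin_apply, mulVecLin_apply, mulVec_mulVec] at hker
  rw [mulVecLin_apply, h (hker.trans (mulVec_zero _).symm), mulVec_zero]

noncomputable def blockColSpan {n : ℕ} {q : ℕ → ℕ} (S : (k : ℕ) → Matrix (Fin n) (Fin (q k)) ℝ)
    (k : ℕ) : Submodule ℝ (Fin n → ℝ) :=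
  (Finset.range (k + 1)).sup fun i => LinearMap.range (S i).mulVecLin

lemma blockColSpan_zero {n : ℕ} {q : ℕ → ℕ} (S : (k : ℕ) → Matrix (Fin n) (Fin (q k)) ℝ) :
    blockColSpan S 0 = LinearMap.range (S 0).mulVecLin := by
  rw [blockColSpan, Finset.range_one, Finset.sup_singleton]

lemma blockColSpan_succ {n : ℕ} {q : ℕ → ℕ} (S : (k : ℕ) → Matrix (Fin n) (Fin (q k)) ℝ)
    (k : ℕ) :
    blockColSpan S (k + 1) = blockColSpan S k ⊔ LinearMap.range (S (k + 1)).mulVecLin := by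
  rw [blockColSpan, Finset.range_add_one (n := k + 1), Finset.sup_insert, sup_comm, blockColSpan]

lemma finrank_blockColSpan {n ρ : ℕ} {q : ℕ → ℕ} {W : ℕ → Matrix (Fin n) (Fin n) ℝ}
    {S : (k : ℕ) → Matrix (Fin n) (Fin (q k)) ℝ}
    (hS : ∀ k ≤ ρ, Function.Injective ((S k)ᵀ * W k * S k).mulVec)
    (horth : ∀ i k : ℕ, i < k → k ≤ ρ → (S k)ᵀ * W k * S i = 0) :
    ∀ k ≤ ρ, Module.finrank ℝ (blockColSpan S k) = ∑ i ∈ Finset.range (k + 1), q i := by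
  have finrank_range : ∀ k ≤ ρ, Module.finrank ℝ (LinearMap.range (S k).mulVecLin) = q k :=
    fun k hk => by
      have hinj : Function.Injective (S k).mulVec := .of_comp (f := ((S k)ᵀ * W k).mulVec) <| by
        simpa only [Function.comp_def, mulVec_mulVec] using hS k hk
      rw [LinearMap.finrank_range_of_inj (by rwa [coe_mulVecLin]), Module.finrank_fin_fun]
  intro k
  induction k with
  | zero => intro h0; rw [blockColSpan_zero, finrank_range 0 h0, Finset.sum_range_one]
  | succ k ih =>
    intro hk
    have hdisj : Disjoint (blockColSpan S k) (LinearMap.range (S (k + 1)).mulVecLin) := by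
      refine Disjoint.mono_left ?_ (disjoint_ker_mulVecLin_range_of_injective_mul (hS (k + 1) hk))
      refine Finset.sup_le fun i hi => LinearMap.range_le_ker_iff.mpr ?_
      rw [← mulVecLin_mul, horth i (k + 1) (by simpa [Nat.lt_succ_iff] using hi) hk,
        mulVecLin_zero]
    have hsup := Submodule.finrank_sup_add_finrank_inf_eq (blockColSpan S k)
      (LinearMap.range (S (k + 1)).mulVecLin)
    rw [hdisj.eq_bot, finrank_bot, add_zero] at hsup
    rw [blockColSpan_succ, Finset.sum_range_succ, hsup, ih (by omega), finrank_range (k + 1) hk]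

lemma eq_zero_of_mul_eq_zero_of_blockColSpan_eq_top {m n k : ℕ} {q : ℕ → ℕ}
    {S : (k : ℕ) → Matrix (Fin n) (Fin (q k)) ℝ} {A : Matrix (Fin m) (Fin n) ℝ}
    (hspan : blockColSpan S k = ⊤) (hA : ∀ i ≤ k, A * S i = 0) : A = 0 := by
  have hker : LinearMap.ker A.mulVecLin = ⊤ := top_le_iff.mp <| hspan ▸
    Finset.sup_le fun i hi => LinearMap.range_le_ker_iff.mpr <| by
      rw [← mulVecLin_mul, hA i (Finset.mem_range_succ_iff.mp hi), mulVecLin_zero]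
  exact Matrix.toLin'.injective <| by rw [toLin'_apply', LinearMap.ker_eq_top.mp hker, map_zero]

lemma leastChangeUpdate_hereditary {n ρ : ℕ} (Q : Matrix (Fin n) (Fin n) ℝ) {q : ℕ → ℕ}
    {W : ℕ → Matrix (Fin n) (Fin n) ℝ} {S : (k : ℕ) → Matrix (Fin n) (Fin (q k)) ℝ}
    {G : ℕ → Matrix (Fin n) (Fin n) ℝ}
    (hS : ∀ k ≤ ρ, IsUnit ((S k)ᵀ * W k * S k).det)
    (horth : ∀ i k : ℕ, i < k → k ≤ ρ → (S k)ᵀ * W k * S i = 0)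
    (hG : ∀ k ≤ ρ, G (k + 1) = leastChangeUpdate Q (G k) (S k) (W k)) :
    ∀ k ≤ ρ, ∀ i ≤ k, G (k + 1) * S i = Q * S i := by
  intro k
  induction k with
  | zero =>
    rintro h0 i hi
    obtain rfl : i = 0 := by omega
    rw [hG 0 h0, leastChangeUpdate_mul_self Q _ (hS 0 h0)]
  | succ k ih =>
    intro hk i hi
    rw [hG (k + 1) hk]
    rcases hi.lt_or_eq with hlt | rfl
    · exact leastChangeUpdate_mul_of_mul_eq (horth i (k + 1) hlt hk)
        (ih (by omega) i (by omega))
    · exact leastChangeUpdate_mul_self Q _ (hS (k + 1) hk)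

theorem stmt3_general {n : ℕ} (ρ : ℕ)
    (Q : Matrix (Fin n) (Fin n) ℝ)
    (q : ℕ → ℕ)
    (W : ℕ → Matrix (Fin n) (Fin n) ℝ)
    (S : (k : ℕ) → Matrix (Fin n) (Fin (q k)) ℝ)
    (hW : ∀ k ≤ ρ, (W k).PosDef)
    (hSli : ∀ k ≤ ρ, LinearIndependent ℝ (fun j : Fin (q k) => (S k)ᵀ j))
    (horth : ∀ i k : ℕ, i < k → k ≤ ρ → (S k)ᵀ * W k * S i = 0)
    (G : ℕ → Matrix (Fin n) (Fin n) ℝ)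
    (hrec : ∀ k ≤ ρ, G (k + 1) =
      Q + (1 - W k * projMat (S k) (W k)) * (G k - Q) * (1 - projMat (S k) (W k) * W k)) :
    (∀ i k : ℕ, i ≤ k → k ≤ ρ → G (k + 1) * S i = Q * S i) ∧
    ((∑ i ∈ Finset.range (ρ + 1), q i) = n → G (ρ + 1) = Q) := by
  have hPD : ∀ k ≤ ρ, ((S k)ᵀ * W k * S k).PosDef := fun k hk =>
    (hW k hk).conjTranspose_mul_mul_same (mulVec_injective_iff.mpr (hSli k hk))
  have hered := leastChangeUpdate_hereditary Q (fun k hk => (hPD k hk).det_pos.ne'.isUnit)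
    horth hrec
  refine ⟨fun i k hik hk => hered k hk i hik, fun hsum => ?_⟩
  have hspan : blockColSpan S ρ = ⊤ := Submodule.eq_top_of_finrank_eq <| by
    rw [finrank_blockColSpan (fun k hk => mulVec_injective_of_isUnit (hPD k hk).isUnit) horth ρ
      le_rfl, hsum, Module.finrank_fin_fun]
  refine sub_eq_zero.mp (eq_zero_of_mul_eq_zero_of_blockColSpan_eq_top hspan fun i hi => ?_)
  rw [Matrix.sub_mul, hered ρ le_rfl i hi, sub_self]

/-- Quadratic Hereditary property of the least-change updates. -/
theorem stmt3 {n : ℕ} (ρ : ℕ) (hρ : 0 < ρ)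
    (Q G₀ : Matrix (Fin n) (Fin n) ℝ) (hQ : Q.IsSymm) (hG₀ : G₀.IsSymm)
    (q : ℕ → ℕ)
    (W : ℕ → Matrix (Fin n) (Fin n) ℝ)
    (S : (k : ℕ) → Matrix (Fin n) (Fin (q k)) ℝ)
    (hW : ∀ k ≤ ρ, (W k).PosDef)
    (hSli : ∀ k ≤ ρ, LinearIndependent ℝ (fun j : Fin (q k) => (S k)ᵀ j))
    (horth : ∀ i k : ℕ, i < k → k ≤ ρ → (S k)ᵀ * W k * S i = 0)
    (G : ℕ → Matrix (Fin n) (Fin n) ℝ)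
    (hG0 : G 0 = G₀)
    (hrec : ∀ k ≤ ρ, G (k + 1) =
      Q + (1 - W k * projMat (S k) (W k)) * (G k - Q) * (1 - projMat (S k) (W k) * W k)) :
    (∀ i k : ℕ, i ≤ k → k ≤ ρ → G (k + 1) * S i = Q * S i) ∧
    ((∑ i ∈ Finset.range (ρ + 1), q i) = n → G (ρ + 1) = Q) :=
  stmt3_general ρ Q q W S hW hSli horth G hrec
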